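/- Let n, k ≥ 1, m = nk, 1 ≤ r ≤ ∞. For j = 1, …, n let v_j = Σ_{i=1}^k e_{j+k(i−1)} ∈ ℝ^m, let E = span{v_1, …, v_n}, and let φ : ℝ^n → E be the linear isometry (with respect to Euclidean norms) with φ(e_j) = v_j/√k. Then φ^{-1}(B_r^m ∩ E) = k^{1/2 − 1/r}·B_r^n; consequently, the n-dimensional volume of B_r^m ∩ E (induced by the Euclidean structure on E) equals k^{n(1/2 − 1/r)}·|B_r^n|, and, for p ≥ q, the n-th volume number of the identity from ℓ_p^m to ℓ_q^m satisfies v_n(id) ≥ (m/n)^{1/q − 1/p}·(|B_p^n|/|B_q^n|)^{1/n}. -/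

import Mathlib

open scoped BigOperators ENNReal Pointwise
open MeasureTheory

/-- The unit ball of `ℓ_r^m` (`1 ≤ r ≤ ∞`), as a subset of `ℝ^m`. -/
noncomputable def pball (r : ℝ≥0∞) (m : ℕ) : Set (EuclideanSpace ℝ (Fin m)) :=
  {x | (if r = ∞ then ⨆ i, |x i| else (∑ i, |x i| ^ r.toReal) ^ r.toReal⁻¹) ≤ 1}

/-- The vector `v_j = Σ_{i=0}^{k-1} e_{j + n·i} ∈ ℝ^{nk}` (indices written `0`-based; the
supports of `v_0, …, v_{n-1}` partition the coordinates). -/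
noncomputable def vvec (n k : ℕ) (j : Fin n) : EuclideanSpace ℝ (Fin (n * k)) :=
  ∑ i : Fin k, EuclideanSpace.single
    ⟨j.val + n * i.val, by
      calc j.val + n * i.val < n + n * i.val := Nat.add_lt_add_right j.isLt _
        _ = n * (i.val + 1) := by ring
        _ ≤ n * k := Nat.mul_le_mul le_rfl i.isLt⟩ (1 : ℝ)

/-- The `n`-th volume number of `id : ℓ_p^m → ℓ_q^m`:
`v_n(id) = sup_E (|B_p^m ∩ E| / |B_q^m ∩ E|)^{1/n}` over `n`-dimensional subspaces `E ⊆ ℝ^m`;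
volumes are `n`-dimensional Hausdorff measures (agreeing, up to a common normalization that
cancels in the ratios, with the Lebesgue measure induced by the Euclidean structure). -/
noncomputable def volNum (m n : ℕ) (K L : Set (EuclideanSpace ℝ (Fin m))) : ℝ :=
  sSup {ρ : ℝ | ∃ E : Submodule ℝ (EuclideanSpace ℝ (Fin m)), Module.finrank ℝ E = n ∧
    ρ = ((μH[(n : ℝ)] (K ∩ (E : Set (EuclideanSpace ℝ (Fin m))))) /
          (μH[(n : ℝ)] (L ∩ (E : Set (EuclideanSpace ℝ (Fin m)))))).toReal ^ (n : ℝ)⁻¹}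

/-!
Every vector `φ x` repeats each coordinate `x_j / √k` exactly `k` times, so
`‖φ x‖_r = k^{1/r - 1/2} ‖x‖_r`; this identifies `φ⁻¹(B_r^m ∩ E)` with a dilate of `B_r^n`.
Since `φ` is an isometry onto `E`, it preserves `n`-dimensional Hausdorff measure, and the
dilation contributes the factor `k^{n(1/2 - 1/r)}`. Taking the ratio for `r = p` and `r = q`
exhibits `E` as a competitor in the supremum defining `v_n(id)`, which is finite because
`B_p^m ⊆ m · B_q^m`.
-/

noncomputable def pnorm {ι : Type*} [Fintype ι] (r : ℝ≥0∞) (x : EuclideanSpace ℝ ι) : ℝ :=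
  if r = ∞ then ⨆ i, |x i| else (∑ i, |x i| ^ r.toReal) ^ r.toReal⁻¹

lemma mem_pball {r : ℝ≥0∞} {m : ℕ} {x : EuclideanSpace ℝ (Fin m)} :
    x ∈ pball r m ↔ pnorm r x ≤ 1 := Iff.rfl

section pnorm

variable {ι : Type*} [Fintype ι] {r : ℝ≥0∞}

lemma pnorm_smul (hr : r ≠ 0) {c : ℝ} (hc : 0 ≤ c) (x : EuclideanSpace ℝ ι) :
    pnorm r (c • x) = c * pnorm r x := by
  have hcx : ∀ i, |(c • x) i| = c * |x i| := fun i => by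
    rw [PiLp.smul_apply, smul_eq_mul, abs_mul, abs_of_nonneg hc]
  unfold pnorm
  split_ifs with htop
  · simp only [hcx, Real.mul_iSup_of_nonneg hc]
  · have hpos := ENNReal.toReal_pos hr htop
    simp only [hcx, Real.mul_rpow hc (abs_nonneg _), ← Finset.mul_sum]
    rw [Real.mul_rpow (by positivity) (by positivity), ← Real.rpow_mul hc,
      mul_inv_cancel₀ hpos.ne', Real.rpow_one]

lemma abs_apply_le_pnorm (hr : r ≠ 0) (x : EuclideanSpace ℝ ι) (i : ι) : |x i| ≤ pnorm r x := by
  unfold pnorm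
  split_ifs with htop
  · exact le_ciSup (f := fun i => |x i|) (Finite.bddAbove_range _) i
  · have hpos := ENNReal.toReal_pos hr htop
    calc |x i| = (|x i| ^ r.toReal) ^ r.toReal⁻¹ := by
          rw [← Real.rpow_mul (abs_nonneg _), mul_inv_cancel₀ hpos.ne', Real.rpow_one]
      _ ≤ _ := by
          gcongr
          exact Finset.single_le_sum (f := fun j => |x j| ^ r.toReal) (fun j _ => by positivity)
            (Finset.mem_univ i)

lemma pnorm_le_card [Nonempty ι] (hr : 1 ≤ r) {x : EuclideanSpace ℝ ι} (hx : ∀ i, |x i| ≤ 1) :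
    pnorm r x ≤ Fintype.card ι := by
  have hcard : (1 : ℝ) ≤ Fintype.card ι := by exact_mod_cast Fintype.card_pos
  unfold pnorm
  split_ifs with htop
  · exact (ciSup_le hx).trans hcard
  · have hr1 : 1 ≤ r.toReal := by simpa using ENNReal.toReal_mono htop hr
    calc (∑ i, |x i| ^ r.toReal) ^ r.toReal⁻¹ ≤ (∑ _i : ι, (1 : ℝ)) ^ r.toReal⁻¹ := by
          gcongr with i
          exact Real.rpow_le_one (abs_nonneg _) (hx i) (by positivity)
      _ ≤ Fintype.card ι := by
          simpa using Real.rpow_le_self_of_one_le hcard (inv_le_one_of_one_le₀ hr1)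

lemma pnorm_of_apply_eq_fst {ι' κ : Type*} [Fintype ι'] [Fintype κ] [Nonempty κ]
    (e : ι × κ ≃ ι') {x : EuclideanSpace ℝ ι} {y : EuclideanSpace ℝ ι'}
    (hxy : ∀ j i, y (e (j, i)) = x j) :
    pnorm r y = (Fintype.card κ : ℝ) ^ r.toReal⁻¹ * pnorm r x := by
  unfold pnorm
  split_ifs with htop
  · rw [htop, ENNReal.toReal_top, inv_zero, Real.rpow_zero, one_mul,
      ← e.iSup_comp]
    simp only [hxy]
    exact Prod.fst_surjective.iSup_comp fun j => |x j|
  · rw [← e.sum_comp, Fintype.sum_prod_type]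
    simp only [hxy, Finset.sum_const, Finset.card_univ, nsmul_eq_mul, ← Finset.mul_sum]
    rw [Real.mul_rpow (by positivity) (by positivity)]

end pnorm

lemma hausdorffMeasure_smul_of_pos {E : Type*} [NormedAddCommGroup E] [NormedSpace ℝ E]
    [MeasurableSpace E] [BorelSpace E] {d : ℝ} (hd : 0 ≤ d) {c : ℝ} (hc : 0 < c) (s : Set E) :
    μH[d] (c • s) = ENNReal.ofReal (c ^ d) * μH[d] s := by
  rw [Measure.hausdorffMeasure_smul₀ hd hc.ne', ENNReal.smul_def, smul_eq_mul,
    ENNReal.ofReal, Real.toNNReal_rpow_of_nonneg hc.le]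
  congr
  ext
  simp [hc.le]

lemma le_volNum_of_forall_le_mul {m n : ℕ} {K L : Set (EuclideanSpace ℝ (Fin m))} {C : ℝ}
    (hC : 0 ≤ C)
    (hKL : ∀ F : Submodule ℝ (EuclideanSpace ℝ (Fin m)),
      μH[(n : ℝ)] (K ∩ F) ≤ ENNReal.ofReal C * μH[(n : ℝ)] (L ∩ F))
    {F : Submodule ℝ (EuclideanSpace ℝ (Fin m))} (hF : Module.finrank ℝ F = n) :
    ((μH[(n : ℝ)] (K ∩ F)) / (μH[(n : ℝ)] (L ∩ F))).toReal ^ (n : ℝ)⁻¹ ≤ volNum m n K L := by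
  refine le_csSup ⟨C ^ (n : ℝ)⁻¹, ?_⟩ ⟨F, hF, rfl⟩
  rintro ρ ⟨G, -, rfl⟩
  have hratio : (μH[(n : ℝ)] (K ∩ G) / μH[(n : ℝ)] (L ∩ G)).toReal ≤ C :=
    ENNReal.toReal_le_of_le_ofReal hC (ENNReal.div_le_of_le_mul (hKL G))
  gcongr

lemma pball_subset_card_smul_pball {m : ℕ} (hm : 0 < m) {p q : ℝ≥0∞} (hp : p ≠ 0)
    (hq : 1 ≤ q) : pball p m ⊆ (m : ℝ) • pball q m := by
  intro y hy
  have : Nonempty (Fin m) := ⟨⟨0, hm⟩⟩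
  have hm' : (0 : ℝ) < m := by exact_mod_cast hm
  refine ⟨(m : ℝ)⁻¹ • y, ?_, smul_inv_smul₀ hm'.ne' y⟩
  rw [mem_pball, pnorm_smul (zero_lt_one.trans_le hq).ne' (by positivity),
    inv_mul_le_iff₀ hm', mul_one]
  simpa using pnorm_le_card hq fun i => (abs_apply_le_pnorm hp y i).trans hy

lemma hausdorffMeasure_pball_inter_le {m : ℕ} (hm : 0 < m) {p q : ℝ≥0∞} (hp : p ≠ 0)
    (hq : 1 ≤ q) {d : ℝ} (hd : 0 ≤ d) (F : Submodule ℝ (EuclideanSpace ℝ (Fin m))) :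
    μH[d] (pball p m ∩ F) ≤ ENNReal.ofReal ((m : ℝ) ^ d) * μH[d] (pball q m ∩ F) := by
  have hm' : (0 : ℝ) < m := by exact_mod_cast hm
  calc μH[d] (pball p m ∩ F) ≤ μH[d] ((m : ℝ) • (pball q m ∩ F)) := by
        refine measure_mono fun y ⟨hy, hyF⟩ => ?_
        obtain ⟨z, hz, rfl⟩ := pball_subset_card_smul_pball hm hp hq hy
        refine ⟨z, ⟨hz, ?_⟩, rfl⟩
        simpa [hm'.ne'] using F.smul_mem (m : ℝ)⁻¹ hyF
    _ = _ := hausdorffMeasure_smul_of_pos hd hm' _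

/-- `(j, i) ↦ j + n i`: the indexing under which `vvec n k j` is the indicator of `{j} × Fin k`. -/
def strideEquiv (n k : ℕ) : Fin n × Fin k ≃ Fin (n * k) :=
  (Equiv.prodComm _ _).trans (finProdFinEquiv.trans (finCongr (Nat.mul_comm k n)))

lemma vvec_apply_strideEquiv (n k : ℕ) (j' j : Fin n) (i : Fin k) :
    vvec n k j' (strideEquiv n k (j, i)) = if j' = j then 1 else 0 := by
  have hidx : ∀ i' : Fin k, (⟨j'.val + n * i'.val, _⟩ : Fin (n * k)) = strideEquiv n k (j', i') :=
    fun i' => Fin.ext rfl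
  simp only [vvec, hidx, WithLp.ofLp_sum, Finset.sum_apply, PiLp.single_apply,
    (strideEquiv n k).apply_eq_iff_eq, Prod.mk.injEq]
  by_cases h : j' = j
  · subst h; simp
  · simp [h, Ne.symm h]

section isometry

variable {n k : ℕ} {φ : EuclideanSpace ℝ (Fin n) →ₗᵢ[ℝ] EuclideanSpace ℝ (Fin (n * k))}

lemma apply_strideEquiv_of_map_single
    (hφ : ∀ j : Fin n, φ (EuclideanSpace.single j (1 : ℝ)) = (Real.sqrt k)⁻¹ • vvec n k j)
    (x : EuclideanSpace ℝ (Fin n)) (j : Fin n) (i : Fin k) :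
    φ x (strideEquiv n k (j, i)) = (Real.sqrt k)⁻¹ * x j := by
  have hx : x = ∑ j', x j' • EuclideanSpace.single j' (1 : ℝ) := by
    simpa using ((EuclideanSpace.basisFun (Fin n) ℝ).sum_repr x).symm
  have hφx : φ x = ∑ j', x j' • (Real.sqrt k)⁻¹ • vvec n k j' := by
    conv_lhs => rw [hx]
    simp only [map_sum, map_smul, hφ]
  rw [hφx]
  simp [vvec_apply_strideEquiv, mul_comm]

lemma pnorm_map_of_map_single (hk : 0 < k)
    (hφ : ∀ j : Fin n, φ (EuclideanSpace.single j (1 : ℝ)) = (Real.sqrt k)⁻¹ • vvec n k j)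
    {r : ℝ≥0∞} (hr : r ≠ 0) (x : EuclideanSpace ℝ (Fin n)) :
    pnorm r (φ x) = (k : ℝ) ^ (r.toReal⁻¹ - 1 / 2) * pnorm r x := by
  have : Nonempty (Fin k) := ⟨⟨0, hk⟩⟩
  have hk' : (0 : ℝ) < k := by exact_mod_cast hk
  rw [pnorm_of_apply_eq_fst (strideEquiv n k) (x := (Real.sqrt k)⁻¹ • x)
      (fun j i => apply_strideEquiv_of_map_single hφ x j i),
    pnorm_smul hr (by positivity), Fintype.card_fin, ← mul_assoc, Real.sqrt_eq_rpow,
    ← Real.rpow_neg hk'.le, ← Real.rpow_add hk', ← sub_eq_add_neg]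

lemma range_eq_span_vvec_of_map_single (hk : 0 < k)
    (hφ : ∀ j : Fin n, φ (EuclideanSpace.single j (1 : ℝ)) = (Real.sqrt k)⁻¹ • vvec n k j) :
    LinearMap.range φ.toLinearMap = Submodule.span ℝ (Set.range (vvec n k)) := by
  have hk' : (0 : ℝ) < Real.sqrt k := Real.sqrt_pos.mpr (by exact_mod_cast hk)
  rw [LinearMap.range_eq_map, ← (EuclideanSpace.basisFun (Fin n) ℝ).toBasis.span_eq,
    Submodule.map_span, ← Set.range_comp]
  simp only [Function.comp_def, OrthonormalBasis.coe_toBasis, EuclideanSpace.basisFun_apply,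
    LinearIsometry.coe_toLinearMap, hφ]
  rw [Set.range_smul]
  exact Submodule.span_smul_eq_of_isUnit _ _ (inv_ne_zero hk'.ne').isUnit

lemma finrank_span_vvec_of_map_single (hk : 0 < k)
    (hφ : ∀ j : Fin n, φ (EuclideanSpace.single j (1 : ℝ)) = (Real.sqrt k)⁻¹ • vvec n k j) :
    Module.finrank ℝ (Submodule.span ℝ (Set.range (vvec n k))) = n := by
  rw [← range_eq_span_vvec_of_map_single hk hφ, LinearMap.finrank_range_of_inj φ.injective,
    finrank_euclideanSpace_fin]

lemma preimage_pball_inter_span_vvec (hk : 0 < k)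
    (hφ : ∀ j : Fin n, φ (EuclideanSpace.single j (1 : ℝ)) = (Real.sqrt k)⁻¹ • vvec n k j)
    {r : ℝ≥0∞} (hr : r ≠ 0) :
    ⇑φ ⁻¹' (pball r (n * k) ∩
        (Submodule.span ℝ (Set.range (vvec n k)) : Set (EuclideanSpace ℝ (Fin (n * k))))) =
      ((k : ℝ) ^ ((1 : ℝ) / 2 - r.toReal⁻¹)) • pball r n := by
  have hk' : (0 : ℝ) < k := by exact_mod_cast hk
  have hc : 0 < (k : ℝ) ^ ((1 : ℝ) / 2 - r.toReal⁻¹) := Real.rpow_pos_of_pos hk' _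
  ext x
  rw [Set.mem_preimage, Set.mem_inter_iff, ← range_eq_span_vvec_of_map_single hk hφ,
    SetLike.mem_coe, and_iff_left ⟨x, rfl⟩, mem_pball,
    pnorm_map_of_map_single hk hφ hr, Set.mem_smul_set_iff_inv_smul_mem₀ hc.ne', mem_pball,
    pnorm_smul hr (inv_nonneg.mpr hc.le), ← Real.rpow_neg hk'.le, neg_sub]

lemma hausdorffMeasure_pball_inter_span_vvec (hk : 0 < k)
    (hφ : ∀ j : Fin n, φ (EuclideanSpace.single j (1 : ℝ)) = (Real.sqrt k)⁻¹ • vvec n k j)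
    {r : ℝ≥0∞} (hr : r ≠ 0) :
    μH[(n : ℝ)] (pball r (n * k) ∩
        (Submodule.span ℝ (Set.range (vvec n k)) : Set (EuclideanSpace ℝ (Fin (n * k))))) =
      ENNReal.ofReal ((k : ℝ) ^ ((n : ℝ) * ((1 : ℝ) / 2 - r.toReal⁻¹))) *
        μH[(n : ℝ)] (pball r n) := by
  have hk' : (0 : ℝ) < k := by exact_mod_cast hk
  set S := pball r (n * k) ∩
    (Submodule.span ℝ (Set.range (vvec n k)) : Set (EuclideanSpace ℝ (Fin (n * k))))
  have hS : S ∩ Set.range φ = S := Set.inter_eq_left.mpr fun y hy => by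
    simpa [← range_eq_span_vvec_of_map_single hk hφ] using hy.2
  rw [← hS, ← φ.isometry.hausdorffMeasure_preimage (Or.inl (Nat.cast_nonneg n)),
    preimage_pball_inter_span_vvec hk hφ hr,
    hausdorffMeasure_smul_of_pos (Nat.cast_nonneg n) (Real.rpow_pos_of_pos hk' _),
    ← Real.rpow_mul hk'.le, mul_comm (_ - _) (n : ℝ)]

lemma ratio_pball_inter_span_vvec (hn : 0 < n) (hk : 0 < k)
    (hφ : ∀ j : Fin n, φ (EuclideanSpace.single j (1 : ℝ)) = (Real.sqrt k)⁻¹ • vvec n k j)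
    {p q : ℝ≥0∞} (hp : p ≠ 0) (hq : q ≠ 0) :
    (μH[(n : ℝ)] (pball p (n * k) ∩
        (Submodule.span ℝ (Set.range (vvec n k)) : Set (EuclideanSpace ℝ (Fin (n * k))))) /
      μH[(n : ℝ)] (pball q (n * k) ∩
        (Submodule.span ℝ (Set.range (vvec n k)) : Set (EuclideanSpace ℝ (Fin (n * k)))))
      ).toReal ^ (n : ℝ)⁻¹ =
      (k : ℝ) ^ (q.toReal⁻¹ - p.toReal⁻¹) *
        (μH[(n : ℝ)] (pball p n) / μH[(n : ℝ)] (pball q n)).toReal ^ (n : ℝ)⁻¹ := by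
  have hk' : (0 : ℝ) < k := by exact_mod_cast hk
  have hn' : (n : ℝ) ≠ 0 := by exact_mod_cast hn.ne'
  rw [hausdorffMeasure_pball_inter_span_vvec hk hφ hp,
    hausdorffMeasure_pball_inter_span_vvec hk hφ hq,
    ENNReal.mul_div_mul_comm (Or.inl (ENNReal.ofReal_pos.mpr (Real.rpow_pos_of_pos hk' _)).ne')
      (Or.inl ENNReal.ofReal_ne_top),
    ← ENNReal.ofReal_div_of_pos (Real.rpow_pos_of_pos hk' _), ENNReal.toReal_ofReal_mul _ _
      (by positivity), Real.mul_rpow (by positivity) ENNReal.toReal_nonneg,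
    ← Real.rpow_sub hk', ← Real.rpow_mul hk'.le]
  congr 2
  field_simp
  ring

end isometry

/-- Let `m = nk`, `E = span{v_1, …, v_n}` and let `φ : ℝ^n → ℝ^m` be the
linear isometry with `φ(e_j) = v_j/√k`.  Then `φ⁻¹(B_r^m ∩ E) = k^{1/2-1/r}·B_r^n`;
consequently the `n`-dimensional volume of `B_r^m ∩ E` equals `k^{n(1/2-1/r)}·|B_r^n|`, and
for `p ≥ q` the `n`-th volume number of `id : ℓ_p^m → ℓ_q^m` satisfies
`v_n(id) ≥ (m/n)^{1/q-1/p}·(|B_p^n|/|B_q^n|)^{1/n}` (with `1/∞ = 0`). -/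
theorem stmt19 (n k : ℕ) (hn : 0 < n) (hk : 0 < k)
    (φ : EuclideanSpace ℝ (Fin n) →ₗᵢ[ℝ] EuclideanSpace ℝ (Fin (n * k)))
    (hφ : ∀ j : Fin n, φ (EuclideanSpace.single j (1 : ℝ)) = (Real.sqrt k)⁻¹ • vvec n k j) :
    (∀ r : ℝ≥0∞, 1 ≤ r →
      ⇑φ ⁻¹' (pball r (n * k) ∩
          (Submodule.span ℝ (Set.range (vvec n k)) : Set (EuclideanSpace ℝ (Fin (n * k))))) =
        ((k : ℝ) ^ ((1 : ℝ) / 2 - r.toReal⁻¹)) • pball r n) ∧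
    (∀ r : ℝ≥0∞, 1 ≤ r →
      μH[(n : ℝ)] (pball r (n * k) ∩
          (Submodule.span ℝ (Set.range (vvec n k)) : Set (EuclideanSpace ℝ (Fin (n * k))))) =
        ENNReal.ofReal ((k : ℝ) ^ ((n : ℝ) * ((1 : ℝ) / 2 - r.toReal⁻¹))) *
          μH[(n : ℝ)] (pball r n)) ∧
    (∀ p q : ℝ≥0∞, 1 ≤ q → q ≤ p →
      ((n * k : ℝ) / (n : ℝ)) ^ (q.toReal⁻¹ - p.toReal⁻¹) *
          ((μH[(n : ℝ)] (pball p n)) / (μH[(n : ℝ)] (pball q n))).toReal ^ (n : ℝ)⁻¹ ≤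
        volNum (n * k) n (pball p (n * k)) (pball q (n * k))) := by
  have hne : ∀ {r : ℝ≥0∞}, 1 ≤ r → r ≠ 0 := fun hr => (zero_lt_one.trans_le hr).ne'
  refine ⟨fun r hr => preimage_pball_inter_span_vvec hk hφ (hne hr),
    fun r hr => hausdorffMeasure_pball_inter_span_vvec hk hφ (hne hr), fun p q hq hqp => ?_⟩
  rw [mul_div_cancel_left₀ (k : ℝ) (by exact_mod_cast hn.ne'),
    ← ratio_pball_inter_span_vvec hn hk hφ (hne (hq.trans hqp)) (hne hq)]
  exact le_volNum_of_forall_le_mul (by positivity)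
    (hausdorffMeasure_pball_inter_le (Nat.mul_pos hn hk) (hne (hq.trans hqp)) hq
      (Nat.cast_nonneg n))
    (finrank_span_vvec_of_map_single hk hφ)
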